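/- Let R be a commutative ring, q ∈ R, and a ∈ R. Let M and M' be R-modules, e₁, e₂ ∈ M, f₁, f₂ ∈ M', and B : M → M' → R an R-bilinear map with B(e₁, f₁) = a, B(e₂, f₂) = −a, and B(e₁, f₂) = B(e₂, f₁) = 0. Let T : M → M and T' : M' → M' be R-linear maps satisfying T e₁ = q • e₁ + (q+1) • e₂, T e₂ = (q² − q) • e₁ + (q² − q − 1) • e₂, T' f₁ = (q² − q − 1) • f₁ + (q² − q) • f₂, and T' f₂ = (q+1) • f₁ + q • f₂. Then B(T eᵢ, fⱼ) = B(eᵢ, (q² − 1) • fⱼ − T' fⱼ) for all i, j ∈ {1,2}. -/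
import Mathlib

/-- The type 2Ci/2Cr Hecke-operator computation: with `B` a bilinear pairing satisfying
`B e₁ f₁ = a`, `B e₂ f₂ = −a`, `B e₁ f₂ = B e₂ f₁ = 0`, and `T`, `T'` acting on the spans of
`e₁, e₂` and `f₁, f₂` by the indicated matrices, one has
`B (T eᵢ) fⱼ = B eᵢ ((q² − 1) • fⱼ − T' fⱼ)` for all `i, j ∈ {1,2}`. -/
theorem statement14 {R : Type*} [CommRing R] (q a : R)
    {M M' : Type*} [AddCommGroup M] [Module R M] [AddCommGroup M'] [Module R M']
    (e₁ e₂ : M) (f₁ f₂ : M') (B : M →ₗ[R] M' →ₗ[R] R)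
    (hB11 : B e₁ f₁ = a) (hB22 : B e₂ f₂ = -a)
    (hB12 : B e₁ f₂ = 0) (hB21 : B e₂ f₁ = 0)
    (T : M →ₗ[R] M) (T' : M' →ₗ[R] M')
    (hTe1 : T e₁ = q • e₁ + (q + 1) • e₂)
    (hTe2 : T e₂ = (q ^ 2 - q) • e₁ + (q ^ 2 - q - 1) • e₂)
    (hTf1 : T' f₁ = (q ^ 2 - q - 1) • f₁ + (q ^ 2 - q) • f₂)
    (hTf2 : T' f₂ = (q + 1) • f₁ + q • f₂) :
    ∀ i j : Fin 2,
      B (T (![e₁, e₂] i)) (![f₁, f₂] j) =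
        B (![e₁, e₂] i) ((q ^ 2 - 1) • (![f₁, f₂] j) - T' (![f₁, f₂] j)) := by
  intro i j
  fin_cases i <;> fin_cases j <;>
    simp [hTe1, hTe2, hTf1, hTf2, hB11, hB22, hB12, hB21, map_add, map_sub, map_smul,
      smul_eq_mul] <;> ring
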